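/- arXiv:2403.17139 — 3 statements merged into one kernel-verified Lean document; each statement's English description precedes it below -/
import Mathlib

section
/- Let K = 2L ≥ 2 be even, let m ≥ 1 be an integer, set N = mK, and let α ∈ [0,2]. Let S_1 = { (s_1, 2m−s_1, s_2, 2m−s_2, …, s_L, 2m−s_L) : s_1, …, s_L ∈ {0,1,…,2m} } be the set of (2m+1)^L pure strategies that allocate exactly 2m to each consecutive pair of battlefields. Then the mixed strategy given by uniform randomization over S_1 induces uniform marginals and is a symmetric equilibrium strategy of the Colonel Blotto game B_α(N,K). -/
/-!
Against any mixed strategy whose marginals are uniform on `{0, …, 2m}`, a pure strategy `s`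
earns `∑ₖ (#{y ≤ 2m | y < sₖ} + α/2·[sₖ ≤ 2m]) / (2m+1)`. Since `α ≥ 0` this is at most
`∑ₖ (sₖ + α/2) / (2m+1) = (N + Kα/2) / (2m+1)`, with equality as soon as every `sₖ ≤ 2m`, which
holds for every `s` in the support of a strategy with uniform marginals. Hence every strategy with
uniform marginals is a symmetric equilibrium strategy. Uniform randomization over `S₁` has uniform
marginals because each coordinate is `c_l` or `2m - c_l` with `c_l` uniform on `{0, …, 2m}`.
-/

open Finset

/-- The set of pure strategies: allocations of `N` units of the resource
over `K` battlefields. -/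
def pureStrats (K N : ℕ) : Finset (Fin K → ℕ) := Finset.Nat.antidiagonalTuple K N

/-- Payoff in the Colonel Blotto game `B_α(N,K)` of playing `s` against `t`:
`π(s,t) = Σ_k [1_{s_k > t_k} + (α/2)·1_{s_k = t_k}]`. -/
noncomputable def payoff (α : ℝ) {K : ℕ} (s t : Fin K → ℕ) : ℝ :=
  ∑ k, ((if t k < s k then (1 : ℝ) else 0) + α / 2 * (if s k = t k then 1 else 0))

/-- `σ` is a mixed strategy: a probability distribution on the pure strategies. -/
def IsMixed (K N : ℕ) (σ : (Fin K → ℕ) → ℝ) : Prop :=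
  (∀ s, 0 ≤ σ s) ∧ (∀ s, s ∉ pureStrats K N → σ s = 0) ∧
    ∑ s ∈ pureStrats K N, σ s = 1

/-- Expected payoff of the mixed strategy `σ` against the mixed strategy `τ`. -/
noncomputable def expPayoff (α : ℝ) (K N : ℕ) (σ τ : (Fin K → ℕ) → ℝ) : ℝ :=
  ∑ s ∈ pureStrats K N, ∑ t ∈ pureStrats K N, σ s * τ t * payoff α s t

/-- `(σA, σB)` is a mixed-strategy Nash equilibrium: both are mixed strategies and
neither player can strictly improve by a unilateral deviation. -/
def IsNashEq (α : ℝ) (K N : ℕ) (σA σB : (Fin K → ℕ) → ℝ) : Prop :=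
  IsMixed K N σA ∧ IsMixed K N σB ∧
    (∀ σ', IsMixed K N σ' → expPayoff α K N σ' σB ≤ expPayoff α K N σA σB) ∧
    (∀ τ', IsMixed K N τ' → expPayoff α K N τ' σA ≤ expPayoff α K N σB σA)

/-- The marginal distribution of `σ` at battlefield `k`, evaluated at `x`. -/
noncomputable def marginal (K N : ℕ) (σ : (Fin K → ℕ) → ℝ) (k : Fin K) (x : ℕ) : ℝ :=
  ∑ s ∈ (pureStrats K N).filter (fun s => s k = x), σ s

/-- `σ` induces uniform marginals on `{0,1,…,2m}` at every battlefield. -/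
def UniformMarginals (K N m : ℕ) (σ : (Fin K → ℕ) → ℝ) : Prop :=
  ∀ k x, marginal K N σ k x = if x ≤ 2 * m then (1 : ℝ) / (2 * m + 1) else 0

/- Uniform randomization over the set `S₁` of the `(2m+1)^L` pure strategies on
`K = 2L` battlefields that allocate `c l ≤ 2m` to battlefield `2l` and `2m − c l`
to battlefield `2l+1`, for each of the `L` consecutive pairs of battlefields. -/
open Classical in
noncomputable def sigma1 (L m : ℕ) : (Fin (2 * L) → ℕ) → ℝ := fun s =>
  if ∃ c : Fin L → ℕ, (∀ l, c l ≤ 2 * m) ∧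
      s = fun k : Fin (2 * L) =>
        if (k : ℕ) % 2 = 0 then c ⟨(k : ℕ) / 2, by have := k.isLt; omega⟩
        else 2 * m - c ⟨(k : ℕ) / 2, by have := k.isLt; omega⟩
  then (1 : ℝ) / (2 * m + 1) ^ L else 0

noncomputable def battlePayoff (α : ℝ) (a b : ℕ) : ℝ :=
  (if b < a then 1 else 0) + α / 2 * (if a = b then 1 else 0)

lemma payoff_eq_sum_battlePayoff (α : ℝ) {K : ℕ} (s t : Fin K → ℕ) :
    payoff α s t = ∑ k, battlePayoff α (s k) (t k) := rfl

lemma sum_range_battlePayoff_le {α : ℝ} (hα : 0 ≤ α) (n x : ℕ) :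
    ∑ y ∈ range n, battlePayoff α x y ≤ x + α / 2 := by
  simp only [battlePayoff]
  rw [sum_add_distrib, ← mul_sum, sum_ite_eq, sum_boole]
  have hlt : #{y ∈ range n | y < x} ≤ x :=
    (card_le_card fun y hy => mem_range.2 (mem_filter.1 hy).2).trans_eq (card_range x)
  have hx : α / 2 * (if x ∈ range n then 1 else 0) ≤ α / 2 := by split_ifs <;> linarith
  exact add_le_add (by exact_mod_cast hlt) hx

lemma sum_range_battlePayoff_of_lt (α : ℝ) {n x : ℕ} (hx : x < n) :
    ∑ y ∈ range n, battlePayoff α x y = x + α / 2 := by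
  have hlt : {y ∈ range n | y < x} = range x := by
    ext y; simp only [mem_filter, mem_range]; omega
  simp [battlePayoff, sum_add_distrib, sum_boole, hlt, hx]

lemma apply_le_of_mem_pureStrats {K N : ℕ} {s : Fin K → ℕ} (hs : s ∈ pureStrats K N)
    (k : Fin K) : s k ≤ N := by
  rw [pureStrats, Nat.mem_antidiagonalTuple] at hs
  exact hs ▸ single_le_sum (fun _ _ => Nat.zero_le _) (mem_univ k)

lemma cast_sum_of_mem_pureStrats {K N : ℕ} {s : Fin K → ℕ} (hs : s ∈ pureStrats K N) :
    ∑ k, (s k : ℝ) = N := by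
  rw [pureStrats, Nat.mem_antidiagonalTuple] at hs
  exact_mod_cast hs

lemma sum_mul_payoff_eq_sum_marginal (α : ℝ) {K N B : ℕ} (hB : N < B)
    (τ : (Fin K → ℕ) → ℝ) (s : Fin K → ℕ) :
    ∑ t ∈ pureStrats K N, τ t * payoff α s t =
      ∑ k, ∑ x ∈ range B, marginal K N τ k x * battlePayoff α (s k) x := by
  simp only [payoff_eq_sum_battlePayoff, mul_sum]
  rw [sum_comm]
  refine sum_congr rfl fun k _ => ?_
  rw [← sum_fiberwise_of_maps_to (g := fun t => t k) (t := range B)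
    fun t ht => mem_range.2 ((apply_le_of_mem_pureStrats ht k).trans_lt hB)]
  refine sum_congr rfl fun x _ => ?_
  rw [marginal, sum_mul]
  exact sum_congr rfl fun t ht => by rw [(mem_filter.1 ht).2]

lemma sum_mul_payoff_of_uniformMarginals (α : ℝ) {K N m : ℕ} {τ : (Fin K → ℕ) → ℝ}
    (hτ : UniformMarginals K N m τ) (s : Fin K → ℕ) :
    ∑ t ∈ pureStrats K N, τ t * payoff α s t =
      (2 * m + 1 : ℝ)⁻¹ * ∑ k, ∑ y ∈ range (2 * m + 1), battlePayoff α (s k) y := by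
  rw [sum_mul_payoff_eq_sum_marginal α (B := N + (2 * m + 1)) (by omega), mul_sum]
  refine sum_congr rfl fun k _ => ?_
  rw [← sum_subset (range_subset_range.2 (by omega : 2 * m + 1 ≤ N + (2 * m + 1))), mul_sum]
  · refine sum_congr rfl fun x hx => ?_
    rw [hτ, if_pos (Nat.lt_succ_iff.1 (mem_range.1 hx)), one_div]
  · intro x _ hx
    rw [hτ, if_neg (by simpa [Nat.lt_succ_iff] using hx), zero_mul]

lemma apply_le_of_uniformMarginals {K N m : ℕ} {τ : (Fin K → ℕ) → ℝ} (hτ₀ : ∀ s, 0 ≤ τ s)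
    (hτ : UniformMarginals K N m τ) {s : Fin K → ℕ} (hs : s ∈ pureStrats K N) (hτs : τ s ≠ 0)
    (k : Fin K) : s k ≤ 2 * m := by
  by_contra! h
  have hzero : marginal K N τ k (s k) = 0 := by rw [hτ, if_neg h.not_ge]
  rw [marginal, sum_eq_zero_iff_of_nonneg fun t _ => hτ₀ t] at hzero
  exact hτs (hzero s (mem_filter.2 ⟨hs, rfl⟩))

lemma expPayoff_eq_sum_mul (α : ℝ) (K N : ℕ) (σ τ : (Fin K → ℕ) → ℝ) :
    expPayoff α K N σ τ =
      ∑ s ∈ pureStrats K N, σ s * ∑ t ∈ pureStrats K N, τ t * payoff α s t := by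
  simp only [expPayoff, mul_sum, mul_assoc]

lemma expPayoff_le_of_forall_le {α V : ℝ} {K N : ℕ} {σ τ : (Fin K → ℕ) → ℝ}
    (hσ : IsMixed K N σ)
    (h : ∀ s ∈ pureStrats K N, ∑ t ∈ pureStrats K N, τ t * payoff α s t ≤ V) :
    expPayoff α K N σ τ ≤ V :=
  calc expPayoff α K N σ τ ≤ ∑ s ∈ pureStrats K N, σ s * V := by
        rw [expPayoff_eq_sum_mul]
        exact sum_le_sum fun s hs => mul_le_mul_of_nonneg_left (h s hs) (hσ.1 s)
    _ = V := by rw [← sum_mul, hσ.2.2, one_mul]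

lemma expPayoff_eq_of_forall_eq {α V : ℝ} {K N : ℕ} {σ τ : (Fin K → ℕ) → ℝ}
    (hσ : IsMixed K N σ)
    (h : ∀ s ∈ pureStrats K N, σ s ≠ 0 → ∑ t ∈ pureStrats K N, τ t * payoff α s t = V) :
    expPayoff α K N σ τ = V :=
  calc expPayoff α K N σ τ = ∑ s ∈ pureStrats K N, σ s * V := by
        rw [expPayoff_eq_sum_mul]
        refine sum_congr rfl fun s hs => ?_
        by_cases hσs : σ s = 0
        · rw [hσs, zero_mul, zero_mul]
        · rw [h s hs hσs]
    _ = V := by rw [← sum_mul, hσ.2.2, one_mul]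

theorem isNashEq_self_of_uniformMarginals {α : ℝ} (hα : 0 ≤ α) {K N m : ℕ}
    {σ : (Fin K → ℕ) → ℝ} (hσ : IsMixed K N σ) (hσu : UniformMarginals K N m σ) :
    IsNashEq α K N σ σ := by
  have hsum {s : Fin K → ℕ} (hs : s ∈ pureStrats K N) :
      ∑ k, ((s k : ℝ) + α / 2) = N + K * (α / 2) := by
    rw [sum_add_distrib, cast_sum_of_mem_pureStrats hs, sum_const, card_univ, Fintype.card_fin,
      nsmul_eq_mul]
  have hle : ∀ σ', IsMixed K N σ' →
      expPayoff α K N σ' σ ≤ (2 * m + 1 : ℝ)⁻¹ * (N + K * (α / 2)) := fun σ' hσ' =>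
    expPayoff_le_of_forall_le hσ' fun s hs => by
      rw [sum_mul_payoff_of_uniformMarginals α hσu, ← hsum hs]
      gcongr with k
      exact sum_range_battlePayoff_le hα _ _
  have heq : expPayoff α K N σ σ = (2 * m + 1 : ℝ)⁻¹ * (N + K * (α / 2)) :=
    expPayoff_eq_of_forall_eq hσ fun s hs hσs => by
      rw [sum_mul_payoff_of_uniformMarginals α hσu, ← hsum hs]
      congr 1
      exact sum_congr rfl fun k _ => sum_range_battlePayoff_of_lt α
        (Nat.lt_succ_of_le (apply_le_of_uniformMarginals hσ.1 hσu hs hσs k))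
  exact ⟨hσ, hσ, fun σ' hσ' => heq ▸ hle σ' hσ', fun τ' hτ' => heq ▸ hle τ' hτ'⟩

section PairedStrategies

variable {L : ℕ} (m : ℕ)

/-- The strategy `(c₀, 2m - c₀, c₁, 2m - c₁, …)` of `S₁`; `sigma1` is uniform on these for
`c ∈ {0, …, 2m}^L`. -/
def pairedStrat (c : Fin L → ℕ) : Fin (2 * L) → ℕ := fun k =>
  if (k : ℕ) % 2 = 0 then c ⟨(k : ℕ) / 2, by have := k.isLt; omega⟩
  else 2 * m - c ⟨(k : ℕ) / 2, by have := k.isLt; omega⟩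

open Classical in
lemma sigma1_eq_ite (s : Fin (2 * L) → ℕ) :
    sigma1 L m s = if ∃ c, (∀ l, c l ≤ 2 * m) ∧ s = pairedStrat m c
      then (1 : ℝ) / (2 * m + 1) ^ L else 0 := rfl

lemma mem_piFinset_range_iff_le {c : Fin L → ℕ} :
    c ∈ Fintype.piFinset (fun _ => range (2 * m + 1)) ↔ ∀ l, c l ≤ 2 * m := by
  simp [Fintype.mem_piFinset]

lemma pairedStrat_injective : Function.Injective (pairedStrat (L := L) m) := by
  intro c₁ c₂ h
  funext l
  simpa [pairedStrat] using congrFun h ⟨2 * l, by omega⟩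

lemma sum_pairedStrat {c : Fin L → ℕ} (hc : ∀ l, c l ≤ 2 * m) :
    ∑ k, pairedStrat m c k = m * (2 * L) := by
  let e : Fin L × Fin 2 ≃ Fin (2 * L) := finProdFinEquiv.trans (finCongr (mul_comm L 2))
  rw [← e.sum_comp, Fintype.sum_prod_type]
  have hpair (l : Fin L) : ∑ i : Fin 2, pairedStrat m c (e (l, i)) = 2 * m := by
    have h1 : (1 + 2 * (l : ℕ)) / 2 = l := by omega
    simpa [e, pairedStrat, Fin.sum_univ_two, finProdFinEquiv, h1] using Nat.add_sub_cancel' (hc l)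
  simp only [hpair, sum_const, card_univ, Fintype.card_fin, smul_eq_mul]
  ring

lemma pairedStrat_mem_pureStrats {c : Fin L → ℕ} (hc : ∀ l, c l ≤ 2 * m) :
    pairedStrat m c ∈ pureStrats (2 * L) (m * (2 * L)) := by
  rw [pureStrats, Nat.mem_antidiagonalTuple, sum_pairedStrat m hc]

lemma sum_sigma1_mul (g : (Fin (2 * L) → ℕ) → ℝ) :
    ∑ s ∈ pureStrats (2 * L) (m * (2 * L)), sigma1 L m s * g s =
      ((2 * m + 1 : ℝ) ^ L)⁻¹ * ∑ c ∈ Fintype.piFinset (fun _ => range (2 * m + 1)),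
        g (pairedStrat m c) := by
  have hsub : (Fintype.piFinset fun _ => range (2 * m + 1)).image (pairedStrat m) ⊆
      pureStrats (2 * L) (m * (2 * L)) := by
    simp only [image_subset_iff, mem_piFinset_range_iff_le]
    exact fun c hc => pairedStrat_mem_pureStrats m hc
  have hzero : ∀ s ∈ pureStrats (2 * L) (m * (2 * L)),
      s ∉ (Fintype.piFinset fun _ => range (2 * m + 1)).image (pairedStrat m) →
        sigma1 L m s * g s = 0 := by
    intro s _ hs
    rw [sigma1_eq_ite, if_neg, zero_mul]
    rintro ⟨c, hc, rfl⟩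
    exact hs (mem_image_of_mem _ ((mem_piFinset_range_iff_le m).2 hc))
  rw [← sum_subset hsub hzero, sum_image fun c _ c' _ h => pairedStrat_injective m h, mul_sum]
  refine sum_congr rfl fun c hc => ?_
  rw [sigma1_eq_ite, if_pos ⟨c, (mem_piFinset_range_iff_le m).1 hc, rfl⟩, one_div]

/-- Coordinate `k` of `pairedStrat m c` is `c l` or `2m - c l`, and the reflection `y ↦ 2m - y`
permutes `{0, …, 2m}`. -/
lemma sum_piFinset_pairedStrat_apply (k : Fin (2 * L)) (g : ℕ → ℝ) :
    ∑ c ∈ Fintype.piFinset (fun _ => range (2 * m + 1)), g (pairedStrat m c k) =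
      (2 * m + 1 : ℝ) ^ (L - 1) * ∑ y ∈ range (2 * m + 1), g y := by
  have hcard : ((#(range (2 * m + 1)) : ℕ) : ℝ) = 2 * m + 1 := by simp
  unfold pairedStrat
  split_ifs
  · rw [Fintype.sum_piFinset_apply, nsmul_eq_mul, Nat.cast_pow, hcard, Fintype.card_fin]
  · rw [Fintype.sum_piFinset_apply (fun y => g (2 * m - y)), nsmul_eq_mul, Nat.cast_pow, hcard,
      Fintype.card_fin, ← sum_range_reflect g]
    rfl

lemma isMixed_sigma1 : IsMixed (2 * L) (m * (2 * L)) (sigma1 L m) := by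
  refine ⟨fun s => ?_, fun s hs => ?_, ?_⟩
  · rw [sigma1_eq_ite]
    split_ifs <;> positivity
  · rw [sigma1_eq_ite, if_neg]
    rintro ⟨c, hc, rfl⟩
    exact hs (pairedStrat_mem_pureStrats m hc)
  · simpa [inv_mul_cancel₀ (by positivity : (2 * m + 1 : ℝ) ^ L ≠ 0)] using
      sum_sigma1_mul m (L := L) fun _ => 1

lemma uniformMarginals_sigma1 :
    UniformMarginals (2 * L) (m * (2 * L)) m (sigma1 L m) := by
  intro k x
  have hpow : (2 * m + 1 : ℝ) ^ L = (2 * m + 1) ^ (L - 1) * (2 * m + 1) := by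
    rw [← pow_succ, Nat.sub_add_cancel (by have := k.isLt; omega : 1 ≤ L)]
  rw [marginal, sum_filter, sum_congr rfl fun s _ => (mul_boole (s k = x) (sigma1 L m s)).symm,
    sum_sigma1_mul, sum_piFinset_pairedStrat_apply m k fun y => if y = x then 1 else 0,
    sum_ite_eq', hpow]
  by_cases hx : x ≤ 2 * m
  · rw [if_pos (mem_range.2 (Nat.lt_succ_of_le hx)), if_pos hx]
    field_simp
  · rw [if_neg (by simpa [Nat.lt_succ_iff] using hx), if_neg hx, mul_zero, mul_zero]

end PairedStrategies

theorem stmt3_general (L m N : ℕ) (hN : N = m * (2 * L))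
    (α : ℝ) (hα : α ∈ Set.Icc (0 : ℝ) 2) :
    IsMixed (2 * L) N (sigma1 L m) ∧
    UniformMarginals (2 * L) N m (sigma1 L m) ∧
    IsNashEq α (2 * L) N (sigma1 L m) (sigma1 L m) := by
  subst hN
  exact ⟨isMixed_sigma1 m, uniformMarginals_sigma1 m,
    isNashEq_self_of_uniformMarginals hα.1 (isMixed_sigma1 m) (uniformMarginals_sigma1 m)⟩

theorem stmt3 (L m N : ℕ) (hL : 1 ≤ L) (hm : 1 ≤ m) (hN : N = m * (2 * L))
    (α : ℝ) (hα : α ∈ Set.Icc (0 : ℝ) 2) :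
    IsMixed (2 * L) N (sigma1 L m) ∧
    UniformMarginals (2 * L) N m (sigma1 L m) ∧
    IsNashEq α (2 * L) N (sigma1 L m) (sigma1 L m) :=
  stmt3_general L m N hN α hα
end

section
/- Let K ≥ 2 be even, let m ≥ 1 be an integer, set N = mK, and let α ∈ [0,2]. Then every pure strategy s of the Colonel Blotto game B_α(N,K) satisfying s_k ≤ 2N/K for every battlefield k is used with positive probability in some symmetric equilibrium strategy; that is, there exists a symmetric equilibrium strategy σ with σ(s) > 0. -/
open Finset

/-!
Pair the battlefields and build a `(2m+1) × K` array whose columns are permutations of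
`{0, …, 2m}`, whose first row is `s`, and whose rows all sum to `N`: on a pair of battlefields
the second column is the reflection `x ↦ 2m - x` of the first, except in the first two rows.
The uniform mixture of the rows has uniform marginals on `{0, …, 2m}`, against which a pure
strategy `t` earns `∑ₖ (min (2m+1) tₖ + α/2 · [tₖ ≤ 2m]) / (2m+1) ≤ (N + αK/2) / (2m+1)`, with
equality when every `tₖ ≤ 2m`; in particular on every row, so the mixture is a best
response to itself.
-/
section Mixtures

variable {K N n : ℕ}

noncomputable def uniformMix (v : Fin n → Fin K → ℕ) : (Fin K → ℕ) → ℝ :=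
  fun t => (#{j | v j = t} : ℝ) / n

variable {v : Fin n → Fin K → ℕ}

lemma sum_uniformMix_mul {S : Finset (Fin K → ℕ)} (hv : ∀ j, v j ∈ S) (f : (Fin K → ℕ) → ℝ) :
    ∑ t ∈ S, uniformMix v t * f t = (∑ j, f (v j)) / n := by
  have hfiber : ∀ t, uniformMix v t * f t = (∑ j with v j = t, f (v j)) / n := fun t => by
    rw [Finset.sum_congr rfl fun j hj => congrArg f (Finset.mem_filter.mp hj).2,
      Finset.sum_const, nsmul_eq_mul, uniformMix]
    ring
  simp_rw [hfiber, ← Finset.sum_div, Finset.sum_fiberwise_of_maps_to fun j _ => hv j]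

lemma uniformMix_pos [NeZero n] (j : Fin n) : 0 < uniformMix v (v j) := by
  have : 0 < #{i | v i = v j} := Finset.card_pos.mpr ⟨j, by simp⟩
  exact div_pos (by exact_mod_cast this) (by exact_mod_cast NeZero.pos n)

lemma exists_eq_of_uniformMix_ne_zero {t : Fin K → ℕ} (ht : uniformMix v t ≠ 0) :
    ∃ j, v j = t := by
  by_contra! h
  simp [uniformMix, Finset.filter_false_of_mem fun j _ => h j] at ht

lemma isMixed_uniformMix [NeZero n] (hv : ∀ j, v j ∈ pureStrats K N) :
    IsMixed K N (uniformMix v) := by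
  refine ⟨fun t => by unfold uniformMix; positivity, fun t ht => ?_, ?_⟩
  · by_contra h
    obtain ⟨j, rfl⟩ := exists_eq_of_uniformMix_ne_zero h
    exact ht (hv j)
  · simpa [NeZero.ne] using sum_uniformMix_mul hv (fun _ => 1)

end Mixtures

section Equilibrium

variable {α : ℝ} {K N : ℕ}

lemma expPayoff_eq_sum_mul_sum (τ σ : (Fin K → ℕ) → ℝ) :
    expPayoff α K N τ σ =
      ∑ t ∈ pureStrats K N, τ t * ∑ u ∈ pureStrats K N, σ u * payoff α t u := by
  simp_rw [expPayoff, Finset.mul_sum]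
  exact Finset.sum_congr rfl fun _ _ => Finset.sum_congr rfl fun _ _ => by ring

lemma isNashEq_self_of_payoff_le {σ : (Fin K → ℕ) → ℝ} (hσ : IsMixed K N σ) (V : ℝ)
    (hle : ∀ t ∈ pureStrats K N, ∑ u ∈ pureStrats K N, σ u * payoff α t u ≤ V)
    (hsupp : ∀ t ∈ pureStrats K N, σ t ≠ 0 → ∑ u ∈ pureStrats K N, σ u * payoff α t u = V) :
    IsNashEq α K N σ σ := by
  have hub : ∀ τ, IsMixed K N τ → expPayoff α K N τ σ ≤ V := fun τ hτ => by
    calc expPayoff α K N τ σ ≤ ∑ t ∈ pureStrats K N, τ t * V := by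
          rw [expPayoff_eq_sum_mul_sum]
          exact Finset.sum_le_sum fun t ht => mul_le_mul_of_nonneg_left (hle t ht) (hτ.1 t)
      _ = V := by rw [← Finset.sum_mul, hτ.2.2, one_mul]
  have hval : expPayoff α K N σ σ = V := by
    calc expPayoff α K N σ σ = ∑ t ∈ pureStrats K N, σ t * V := by
          rw [expPayoff_eq_sum_mul_sum]
          refine Finset.sum_congr rfl fun t ht => ?_
          rcases eq_or_ne (σ t) 0 with h | h
          · simp [h]
          · rw [hsupp t ht h]
      _ = V := by rw [← Finset.sum_mul, hσ.2.2, one_mul]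
  exact ⟨hσ, hσ, fun τ hτ => (hub τ hτ).trans hval.ge, fun τ hτ => (hub τ hτ).trans hval.ge⟩

/-- `n` times the payoff, on one battlefield, of allocating `y` against the uniform
distribution on `{0, …, n - 1}`. -/
noncomputable def uniformGain (α : ℝ) (n y : ℕ) : ℝ :=
  (min n y : ℕ) + α / 2 * if y < n then 1 else 0

lemma uniformGain_le (hα : 0 ≤ α) (n y : ℕ) : uniformGain α n y ≤ y + α / 2 := by
  have hmin : ((min n y : ℕ) : ℝ) ≤ y := by exact_mod_cast min_le_right n y
  have hind : (if y < n then (1 : ℝ) else 0) ≤ 1 := by split_ifs <;> norm_num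
  simpa [uniformGain] using add_le_add hmin (mul_le_mul_of_nonneg_left hind (by positivity))

lemma uniformGain_of_lt {n y : ℕ} (h : y < n) : uniformGain α n y = y + α / 2 := by
  simp [uniformGain, h, h.le]

lemma sum_add_half_of_mem_pureStrats {t : Fin K → ℕ} (ht : t ∈ pureStrats K N) :
    ∑ k, ((t k : ℝ) + α / 2) = N + α / 2 * K := by
  rw [Finset.sum_add_distrib, ← Nat.cast_sum, Finset.Nat.mem_antidiagonalTuple.mp ht]
  simp [mul_comm]

variable {n : ℕ}

lemma sum_perm_payoff_eq_uniformGain (α : ℝ) (e : Equiv.Perm (Fin n)) (y : ℕ) :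
    ∑ j, ((if (e j : ℕ) < y then (1 : ℝ) else 0) + α / 2 * if y = e j then 1 else 0) =
      uniformGain α n y := by
  rw [Equiv.sum_comp e fun x : Fin n => (if (x : ℕ) < y then (1 : ℝ) else 0) +
      α / 2 * if y = x then 1 else 0, Finset.sum_add_distrib, ← Finset.mul_sum,
    Finset.sum_boole, Fin.card_filter_val_lt,
    Fin.sum_univ_eq_sum_range (fun x => if y = x then (1 : ℝ) else 0), Finset.sum_ite_eq]
  simp [uniformGain]

def designRow (cols : Fin K → Equiv.Perm (Fin n)) (j : Fin n) : Fin K → ℕ :=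
  fun k => cols k j

lemma sum_payoff_designRow (cols : Fin K → Equiv.Perm (Fin n)) (t : Fin K → ℕ) :
    ∑ j, payoff α t (designRow cols j) = ∑ k, uniformGain α n (t k) := by
  simp only [payoff, designRow]
  rw [Finset.sum_comm]
  exact Finset.sum_congr rfl fun k _ => sum_perm_payoff_eq_uniformGain α (cols k) (t k)

theorem isNashEq_uniformMix_designRow [NeZero n] (hα : 0 ≤ α)
    (cols : Fin K → Equiv.Perm (Fin n)) (hrow : ∀ j, ∑ k, (cols k j : ℕ) = N) :
    IsNashEq α K N (uniformMix (designRow cols)) (uniformMix (designRow cols)) := by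
  have hv : ∀ j, designRow cols j ∈ pureStrats K N :=
    fun j => Finset.Nat.mem_antidiagonalTuple.mpr (hrow j)
  refine isNashEq_self_of_payoff_le (isMixed_uniformMix hv) ((N + α / 2 * K) / n)
    (fun t ht => ?_) (fun t ht hσt => ?_)
  · rw [sum_uniformMix_mul hv, sum_payoff_designRow, ← sum_add_half_of_mem_pureStrats ht]
    gcongr with k
    exact uniformGain_le hα n (t k)
  · obtain ⟨j, rfl⟩ := exists_eq_of_uniformMix_ne_zero hσt
    rw [sum_uniformMix_mul hv, sum_payoff_designRow, ← sum_add_half_of_mem_pureStrats ht]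
    congr 1
    exact Finset.sum_congr rfl fun k _ => uniformGain_of_lt (cols k j).isLt

end Equilibrium

lemma exists_perm_apply_eq_apply_eq {β : Type*} [DecidableEq β] {x y a c : β} (hxy : x ≠ y)
    (hac : a ≠ c) : ∃ p : Equiv.Perm β, p x = a ∧ p y = c := by
  set e := Equiv.swap x a
  have hex : e x = a := Equiv.swap_apply_left x a
  have hey : e y ≠ a := fun h => hxy (e.injective (h.trans hex.symm)).symm
  refine ⟨e.trans (Equiv.swap (e y) c), ?_, Equiv.swap_apply_left _ _⟩
  rw [Equiv.trans_apply, hex]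
  exact Equiv.swap_apply_of_ne_of_ne hey.symm hac

/-- `q` is the reflection `x ↦ 2m - x` of `p`, precomposed with the swap of rows `0` and `1`
unless `a + b = 2m`. -/
lemma exists_perm_pair {m : ℕ} (hm : 1 ≤ m) (a b : Fin (2 * m + 1)) :
    ∃ p q : Equiv.Perm (Fin (2 * m + 1)), p 0 = a ∧ q 0 = b ∧
      (a + b + (p 1 + q 1) : ℕ) = 4 * m ∧ ∀ j, j ≠ 0 → j ≠ 1 → (p j + q j : ℕ) = 2 * m := by
  have hrev : ∀ x : Fin (2 * m + 1), (x + x.rev : ℕ) = 2 * m := fun x => by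
    rw [Fin.val_rev]; omega
  by_cases hab : (a + b : ℕ) = 2 * m
  · have hb : a.rev = b := Fin.ext (by have := hrev a; omega)
    refine ⟨Equiv.swap 0 a, (Equiv.swap 0 a).trans Fin.revPerm, by simp, by simp [hb], ?_,
      fun j _ _ => hrev _⟩
    have := hrev (Equiv.swap 0 a 1)
    simp only [Equiv.trans_apply, Fin.revPerm_apply]
    omega
  · have h01 : (0 : Fin (2 * m + 1)) ≠ 1 := by simp [Fin.ext_iff]; omega
    have hne : a ≠ b.rev := fun h => hab (by have := hrev b; rw [h]; omega)
    obtain ⟨p, hp0, hp1⟩ := exists_perm_apply_eq_apply_eq h01 hne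
    refine ⟨p, ((Equiv.swap 0 1).trans p).trans Fin.revPerm, hp0, by simp [hp1], ?_,
      fun j hj0 hj1 => ?_⟩
    · have := hrev a
      have := hrev b
      simp only [Equiv.trans_apply, Fin.revPerm_apply, Equiv.swap_apply_right, hp0, hp1]
      omega
    · simpa [Equiv.swap_apply_of_ne_of_ne hj0 hj1] using hrev (p j)

lemma sum_fin_mul_two {M : Type*} [AddCommMonoid M] {r : ℕ} (f : Fin (r * 2) → M) :
    ∑ k, f k = ∑ i, (f (finProdFinEquiv (i, 0)) + f (finProdFinEquiv (i, 1))) := by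
  rw [← finProdFinEquiv.sum_comp, Fintype.sum_prod_type]
  simp [Fin.sum_univ_two]

lemma exists_designRow_eq {m r : ℕ} (hm : 1 ≤ m) (s : Fin (r * 2) → ℕ)
    (hs : ∀ k, s k ≤ 2 * m) (hsum : ∑ k, s k = m * (r * 2)) :
    ∃ cols : Fin (r * 2) → Equiv.Perm (Fin (2 * m + 1)),
      designRow cols 0 = s ∧ ∀ j, ∑ k, (cols k j : ℕ) = m * (r * 2) := by
  let a : Fin 2 → Fin r → Fin (2 * m + 1) := fun e i =>
    ⟨s (finProdFinEquiv (i, e)), Nat.lt_succ_of_le (hs _)⟩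
  choose p q hp0 hq0 hrow1 hrow using fun i => exists_perm_pair hm (a 0 i) (a 1 i)
  let cols : Fin (r * 2) → Equiv.Perm (Fin (2 * m + 1)) := fun k =>
    ![p, q] (finProdFinEquiv.symm k).2 (finProdFinEquiv.symm k).1
  have hcols : ∀ i, cols (finProdFinEquiv (i, 0)) = p i ∧ cols (finProdFinEquiv (i, 1)) = q i :=
    fun i => by simp only [cols, Equiv.symm_apply_apply]; exact ⟨rfl, rfl⟩
  have hpair : ∀ j, ∑ k, (cols k j : ℕ) = ∑ i, (p i j + q i j : ℕ) := fun j => by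
    simp [sum_fin_mul_two, hcols]
  have hsum_a : ∑ i, (a 0 i + a 1 i : ℕ) = m * (r * 2) := by
    simp [a, ← hsum, sum_fin_mul_two s]
  refine ⟨cols, funext fun k => ?_, fun j => ?_⟩
  · obtain ⟨⟨i, e⟩, rfl⟩ := finProdFinEquiv.surjective k
    fin_cases e <;> simp [designRow, hcols, hp0, hq0, a]
  rw [hpair]
  by_cases hj0 : j = 0
  · simpa [hj0, hp0, hq0] using hsum_a
  by_cases hj1 : j = 1
  · have h := Finset.sum_congr rfl fun i (_ : i ∈ Finset.univ) => hrow1 i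
    simp only [Finset.sum_add_distrib, Finset.sum_const, Finset.card_univ, Fintype.card_fin,
      smul_eq_mul] at h hsum_a
    rw [hj1, Finset.sum_add_distrib]
    linarith
  · rw [Finset.sum_congr rfl fun i _ => hrow i j hj0 hj1, Finset.sum_const, Finset.card_univ,
      Fintype.card_fin, smul_eq_mul]
    ring

theorem stmt4_general (K m N : ℕ) (hKeven : Even K) (hm : 1 ≤ m) (hN : N = m * K)
    (α : ℝ) (hα : α ∈ Set.Icc (0 : ℝ) 2)
    (s : Fin K → ℕ) (hs : s ∈ pureStrats K N)
    (hbound : ∀ k, (s k : ℝ) ≤ 2 * (N : ℝ) / K) :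
    ∃ σ, IsNashEq α K N σ σ ∧ 0 < σ s := by
  obtain ⟨r, rfl⟩ : ∃ r, K = r * 2 := ⟨K / 2, (Nat.div_mul_cancel hKeven.two_dvd).symm⟩
  subst hN
  have hs_le : ∀ k, s k ≤ 2 * m := fun k => by
    have hr : (r : ℝ) ≠ 0 := Nat.cast_ne_zero.mpr (by have := k.pos; omega)
    have hk := hbound k
    rw [show 2 * ((m * (r * 2) : ℕ) : ℝ) / ((r * 2 : ℕ) : ℝ) = 2 * m by push_cast; field_simp] at hk
    exact_mod_cast hk
  obtain ⟨cols, hcol0, hrow⟩ :=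
    exists_designRow_eq hm s hs_le (Finset.Nat.mem_antidiagonalTuple.mp hs)
  refine ⟨uniformMix (designRow cols), isNashEq_uniformMix_designRow hα.1 cols hrow, ?_⟩
  rw [← hcol0]
  exact uniformMix_pos 0

theorem stmt4 (K m N : ℕ) (hK : 2 ≤ K) (hKeven : Even K) (hm : 1 ≤ m) (hN : N = m * K)
    (α : ℝ) (hα : α ∈ Set.Icc (0 : ℝ) 2)
    (s : Fin K → ℕ) (hs : s ∈ pureStrats K N)
    (hbound : ∀ k, (s k : ℝ) ≤ 2 * (N : ℝ) / K) :
    ∃ σ, IsNashEq α K N σ σ ∧ 0 < σ s :=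
  stmt4_general K m N hKeven hm hN α hα s hs hbound
end

section
/- Let α ∈ [0,2] and consider the Colonel Blotto game B_α(6,4). Then the mixed strategy that randomizes uniformly over the four pure strategies (0,3,0,3), (1,2,1,2), (2,1,2,1), and (3,0,3,0) is a symmetric equilibrium strategy of B_α(6,4). -/
open Finset

/-- Uniform randomization over `{(0,3,0,3), (1,2,1,2), (2,1,2,1), (3,0,3,0)}`. -/
noncomputable def sigmaEx4 : (Fin 4 → ℕ) → ℝ := fun s =>
  if s ∈ ({![0,3,0,3], ![1,2,1,2], ![2,1,2,1], ![3,0,3,0]} : Finset (Fin 4 → ℕ))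
  then 1 / 4 else 0

/-! ### Auxiliary machinery -/

def S4 : Finset (Fin 4 → ℕ) :=
  ({![0,3,0,3], ![1,2,1,2], ![2,1,2,1], ![3,0,3,0]} : Finset (Fin 4 → ℕ))

def Wn (s t : Fin 4 → ℕ) : ℕ := (Finset.univ.filter fun k => t k < s k).card
def Tn (s t : Fin 4 → ℕ) : ℕ := (Finset.univ.filter fun k => s k = t k).card
def Wtot (s : Fin 4 → ℕ) : ℕ :=
  Wn s ![0,3,0,3] + Wn s ![1,2,1,2] + Wn s ![2,1,2,1] + Wn s ![3,0,3,0]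
def Ttot (s : Fin 4 → ℕ) : ℕ :=
  Tn s ![0,3,0,3] + Tn s ![1,2,1,2] + Tn s ![2,1,2,1] + Tn s ![3,0,3,0]

lemma sigmaEx4_eq (s : Fin 4 → ℕ) : sigmaEx4 s = if s ∈ S4 then (1:ℝ)/4 else 0 := rfl

lemma S4_subset : S4 ⊆ pureStrats 4 6 := by decide

lemma key_bound : ∀ s ∈ pureStrats 4 6, Wtot s ≤ 6 ∧ Wtot s + Ttot s ≤ 10 := by decide

lemma supp_vals : ∀ s ∈ S4, Wtot s = 6 ∧ Ttot s = 4 := by decide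

lemma payoff_eq (α : ℝ) (s t : Fin 4 → ℕ) :
    payoff α s t = (Wn s t : ℝ) + α / 2 * (Tn s t : ℝ) := by
  unfold payoff Wn Tn
  rw [Finset.sum_add_distrib, Finset.sum_boole, ← Finset.mul_sum, Finset.sum_boole]

lemma sum_S4 (f : (Fin 4 → ℕ) → ℝ) :
    ∑ t ∈ S4, f t = f ![0,3,0,3] + f ![1,2,1,2] + f ![2,1,2,1] + f ![3,0,3,0] := by
  rw [show S4 = insert ![0,3,0,3] (insert ![1,2,1,2] (insert ![2,1,2,1]
      ({![3,0,3,0]} : Finset (Fin 4 → ℕ)))) from rfl,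
    Finset.sum_insert (by decide), Finset.sum_insert (by decide),
    Finset.sum_insert (by decide), Finset.sum_singleton]
  ring

lemma inner_eq (α : ℝ) (s : Fin 4 → ℕ) :
    ∑ t ∈ pureStrats 4 6, sigmaEx4 t * payoff α s t
      = (1/4) * ((Wtot s : ℝ) + α / 2 * (Ttot s : ℝ)) := by
  rw [← Finset.sum_subset S4_subset (fun t _ ht => by
        rw [sigmaEx4_eq, if_neg ht, zero_mul])]
  have : ∀ t ∈ S4, sigmaEx4 t * payoff α s t = (1/4) * payoff α s t := by
    intro t ht; rw [sigmaEx4_eq, if_pos ht]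
  rw [Finset.sum_congr rfl this, sum_S4]
  simp only [payoff_eq]
  unfold Wtot Ttot
  push_cast
  ring

lemma sigma_mixed : IsMixed 4 6 sigmaEx4 := by
  refine ⟨fun s => ?_, fun s hs => ?_, ?_⟩
  · rw [sigmaEx4_eq]; split <;> norm_num
  · rw [sigmaEx4_eq, if_neg (fun h => hs (S4_subset h))]
  · rw [← Finset.sum_subset S4_subset (fun t _ ht => by rw [sigmaEx4_eq, if_neg ht])]
    have : ∀ t ∈ S4, sigmaEx4 t = (1:ℝ)/4 := fun t ht => by rw [sigmaEx4_eq, if_pos ht]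
    rw [Finset.sum_congr rfl this, sum_S4]
    norm_num

lemma expPayoff_eq (α : ℝ) (σ' : (Fin 4 → ℕ) → ℝ) :
    expPayoff α 4 6 σ' sigmaEx4
      = ∑ s ∈ pureStrats 4 6, σ' s * ((1/4) * ((Wtot s : ℝ) + α / 2 * (Ttot s : ℝ))) := by
  unfold expPayoff
  refine Finset.sum_congr rfl fun s _ => ?_
  rw [← inner_eq, Finset.mul_sum]
  exact Finset.sum_congr rfl fun t _ => by ring

lemma value_eq (α : ℝ) : expPayoff α 4 6 sigmaEx4 sigmaEx4 = (6 + 2 * α) / 4 := by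
  rw [expPayoff_eq]
  rw [← Finset.sum_subset S4_subset (fun t _ ht => by rw [sigmaEx4_eq, if_neg ht, zero_mul])]
  have : ∀ s ∈ S4, sigmaEx4 s * ((1/4) * ((Wtot s : ℝ) + α / 2 * (Ttot s : ℝ)))
      = (1/4) * ((1/4) * (6 + α / 2 * 4)) := by
    intro s hs
    obtain ⟨hw, ht⟩ := supp_vals s hs
    rw [sigmaEx4_eq, if_pos hs, hw, ht]
    norm_num
  rw [Finset.sum_congr rfl this, sum_S4]
  ring

lemma dev_bound (α : ℝ) (hα : α ∈ Set.Icc (0:ℝ) 2) (σ' : (Fin 4 → ℕ) → ℝ)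
    (hσ' : IsMixed 4 6 σ') :
    expPayoff α 4 6 σ' sigmaEx4 ≤ expPayoff α 4 6 sigmaEx4 sigmaEx4 := by
  obtain ⟨hpos, _, hsum⟩ := hσ'
  obtain ⟨hα0, hα2⟩ := hα
  rw [expPayoff_eq, value_eq]
  calc ∑ s ∈ pureStrats 4 6, σ' s * ((1/4) * ((Wtot s : ℝ) + α / 2 * (Ttot s : ℝ)))
      ≤ ∑ s ∈ pureStrats 4 6, σ' s * ((6 + 2 * α) / 4) := by
        refine Finset.sum_le_sum fun s hs => ?_
        refine mul_le_mul_of_nonneg_left ?_ (hpos s)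
        obtain ⟨hw, hwt⟩ := key_bound s hs
        have hw' : (Wtot s : ℝ) ≤ 6 := by exact_mod_cast hw
        have hwt' : (Wtot s : ℝ) + (Ttot s : ℝ) ≤ 10 := by exact_mod_cast hwt
        have hT0 : (0:ℝ) ≤ (Ttot s : ℝ) := Nat.cast_nonneg _
        nlinarith
    _ = (6 + 2 * α) / 4 := by rw [← Finset.sum_mul, hsum, one_mul]

theorem stmt12 (α : ℝ) (hα : α ∈ Set.Icc (0 : ℝ) 2) :
    IsNashEq α 4 6 sigmaEx4 sigmaEx4 := by
  exact ⟨sigma_mixed, sigma_mixed, fun σ' h => dev_bound α hα σ' h,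
    fun τ' h => dev_bound α hα τ' h⟩
end
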